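/- arXiv:1608.06931 — 6 statements merged into one kernel-verified Lean document; each statement's English description precedes it below -/
import Mathlib

section
/- Let n > k ≥ 1 and let σ be a permutation of size n. If σ is k-prolific, then σ is also j-prolific for every j with 1 ≤ j < k. -/
open Finset

namespace Prolific

/-- The L¹ ("taxicab") distance between the `i`th and `j`th entries of `σ`. -/
def dperm {n : ℕ} (σ : Equiv.Perm (Fin n)) (i j : Fin n) : ℕ :=
  Nat.dist (i : ℕ) (j : ℕ) + Nat.dist (σ i : ℕ) (σ j : ℕ)

/-- The breadth of a permutation: the minimum distance between two distinct entries. -/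
noncomputable def breadth {n : ℕ} (σ : Equiv.Perm (Fin n)) : ℕ :=
  sInf {d : ℕ | ∃ i j : Fin n, i ≠ j ∧ d = dperm σ i j}

/-- The pattern `σ_⟨A⟩` of `σ` obtained by deleting the entries in positions `A`. -/
noncomputable def pattern {n m : ℕ} (σ : Equiv.Perm (Fin n)) (A : Finset (Fin n))
    (h : Aᶜ.card = m) : Equiv.Perm (Fin m) :=
  (Aᶜ.orderIsoOfFin h).toEquiv.trans
    (((Equiv.subtypeEquiv (σ : Equiv.Perm (Fin n)) (fun a => by
        constructor
        · exact fun ha => Finset.mem_image_of_mem σ ha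
        · intro ha
          rcases Finset.mem_image.mp ha with ⟨x, hx, hxa⟩
          rwa [← σ.injective hxa])).trans
      ((Aᶜ.image σ).orderIsoOfFin
        (by rw [Finset.card_image_of_injective _ σ.injective, h])).toEquiv.symm))

/-- `σ_⟨A⟩ = σ_⟨B⟩` (in particular the two patterns have the same size). -/
def PatternEq {n : ℕ} (σ : Equiv.Perm (Fin n)) (A B : Finset (Fin n)) : Prop :=
  ∃ (m : ℕ) (hA : Aᶜ.card = m) (hB : Bᶜ.card = m), pattern σ A hA = pattern σ B hB

/-- `σ` is `k`-prolific: distinct `k`-element sets of positions produce distinct patterns. -/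
def IsProlific {n : ℕ} (k : ℕ) (σ : Equiv.Perm (Fin n)) : Prop :=
  ∀ A B : Finset (Fin n), A.card = k → B.card = k → A ≠ B → ¬ PatternEq σ A B

/-! Suppose `σ_⟨A⟩ = σ_⟨B⟩ = π` with `|A| = |B| = j < k` and `A ≠ B`, and pick `x ∈ A \ B`; it
survives in `σ_⟨B⟩` at some position `c` of `π`. Deleting from `π` a set `C ∌ c` of `k - j`
positions is the same as deleting `A ∪ ι_A(C)` or `B ∪ ι_B(C)` from `σ`, where `ι_A`, `ι_B` are the
increasing enumerations of `Aᶜ`, `Bᶜ`. These are two `k`-sets, distinct since only the first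
contains `x`, with the same pattern `π_⟨C⟩`. -/

theorem _root_.Equiv.Perm.eq_of_forall_le_iff_le {m : ℕ} {π τ : Equiv.Perm (Fin m)}
    (h : ∀ s t, π s ≤ π t ↔ τ s ≤ τ t) : π = τ := by
  have hmono : StrictMono (π ∘ τ.symm) := fun u v huv => by
    simpa only [Function.comp_apply, not_le, Equiv.apply_symm_apply] using
      (h (τ.symm v) (τ.symm u)).not.mpr (by simpa using huv)
  exact Equiv.ext fun s => by simpa using congrFun hmono.eq_id (τ s)

theorem pattern_le_pattern_iff {n m : ℕ} (σ : Equiv.Perm (Fin n)) (A : Finset (Fin n))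
    (h : Aᶜ.card = m) (s t : Fin m) :
    pattern σ A h s ≤ pattern σ A h t ↔
      σ (Aᶜ.orderEmbOfFin h s) ≤ σ (Aᶜ.orderEmbOfFin h t) := by
  set e := (Aᶜ.image σ).orderIsoOfFin (by rw [card_image_of_injective _ σ.injective, h])
  have he : ∀ u, e (pattern σ A h u) = ⟨σ (Aᶜ.orderEmbOfFin h u), mem_image_of_mem σ (by simp)⟩ :=
    fun u => by simp [e, pattern, Equiv.subtypeEquiv]
  rw [← e.le_iff_le, he, he, Subtype.mk_le_mk]

theorem compl_union_map_orderEmbOfFin {n m : ℕ} (A : Finset (Fin n)) (hA : Aᶜ.card = m)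
    (C : Finset (Fin m)) :
    (A ∪ C.map (Aᶜ.orderEmbOfFin hA).toEmbedding)ᶜ = Cᶜ.map (Aᶜ.orderEmbOfFin hA).toEmbedding := by
  ext x
  by_cases hx : x ∈ A
  · have : ∀ c, Aᶜ.orderEmbOfFin hA c ≠ x := fun c hc => by
      simpa [hc, hx] using Aᶜ.orderEmbOfFin_mem hA c
    simp [hx, this]
  · obtain ⟨c, rfl⟩ : x ∈ Set.range (Aᶜ.orderEmbOfFin hA) := by simpa using hx
    simp

theorem pattern_pattern {n m l : ℕ} (σ : Equiv.Perm (Fin n)) (A : Finset (Fin n))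
    (hA : Aᶜ.card = m) (C : Finset (Fin m)) (hC : Cᶜ.card = l)
    (hAC : (A ∪ C.map (Aᶜ.orderEmbOfFin hA).toEmbedding)ᶜ.card = l) :
    pattern (pattern σ A hA) C hC =
      pattern σ (A ∪ C.map (Aᶜ.orderEmbOfFin hA).toEmbedding) hAC := by
  have hmem : ∀ i, Aᶜ.orderEmbOfFin hA (Cᶜ.orderEmbOfFin hC i) ∈
      (A ∪ C.map (Aᶜ.orderEmbOfFin hA).toEmbedding)ᶜ := fun i => by
    rw [compl_union_map_orderEmbOfFin]
    exact mem_map_of_mem _ (orderEmbOfFin_mem _ _ _)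
  have hemb := orderEmbOfFin_unique hAC hmem
    ((Aᶜ.orderEmbOfFin hA).strictMono.comp (Cᶜ.orderEmbOfFin hC).strictMono)
  refine Equiv.Perm.eq_of_forall_le_iff_le fun s t => ?_
  rw [pattern_le_pattern_iff, pattern_le_pattern_iff, pattern_le_pattern_iff, ← hemb]

theorem card_union_map_orderEmbOfFin {n m : ℕ} (A : Finset (Fin n)) (hA : Aᶜ.card = m)
    (C : Finset (Fin m)) :
    (A ∪ C.map (Aᶜ.orderEmbOfFin hA).toEmbedding).card = A.card + C.card := by
  refine (card_union_of_disjoint (disjoint_left.mpr fun x hxA hxC => ?_)).trans (by rw [card_map])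
  obtain ⟨c, -, rfl⟩ := mem_map.mp hxC
  exact mem_compl.mp (orderEmbOfFin_mem _ hA c) hxA

theorem patternEq_union_map {n m : ℕ} {σ : Equiv.Perm (Fin n)} {A B : Finset (Fin n)}
    (hA : Aᶜ.card = m) (hB : Bᶜ.card = m) (h : pattern σ A hA = pattern σ B hB)
    (C : Finset (Fin m)) :
    PatternEq σ (A ∪ C.map (Aᶜ.orderEmbOfFin hA).toEmbedding)
      (B ∪ C.map (Bᶜ.orderEmbOfFin hB).toEmbedding) := by
  have hcard (D : Finset (Fin n)) (hD : Dᶜ.card = m) :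
      (D ∪ C.map (Dᶜ.orderEmbOfFin hD).toEmbedding)ᶜ.card = Cᶜ.card := by
    rw [compl_union_map_orderEmbOfFin, card_map]
  exact ⟨_, hcard A hA, hcard B hB,
    by rw [← pattern_pattern σ A hA C rfl, ← pattern_pattern σ B hB C rfl, h]⟩

theorem IsProlific.of_le {n j k : ℕ} {σ : Equiv.Perm (Fin n)} (h : IsProlific k σ) (hjk : j ≤ k)
    (hkn : k < n) : IsProlific j σ := by
  rintro A B hAj hBj hAB ⟨m, hA, hB, hpat⟩
  obtain ⟨x, hxA, hxB⟩ := not_subset.mp fun hsub => hAB (eq_of_subset_of_card_le hsub (by omega))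
  obtain ⟨c, hc⟩ : x ∈ Set.range (Bᶜ.orderEmbOfFin hB) := by simpa using hxB
  have hm : m = n - j := by rw [← hA, card_compl, hAj, Fintype.card_fin]
  obtain ⟨C, hCc, hC⟩ : ∃ C ⊆ univ.erase c, C.card = k - j :=
    exists_subset_card_eq (by rw [card_erase_of_mem (mem_univ c), card_fin]; omega)
  refine h _ _ (by rw [card_union_map_orderEmbOfFin, hAj, hC]; omega)
    (by rw [card_union_map_orderEmbOfFin, hBj, hC]; omega) (fun hAB' => ?_)
    (patternEq_union_map hA hB hpat C)
  have hx : x ∈ B ∪ C.map (Bᶜ.orderEmbOfFin hB).toEmbedding := hAB' ▸ mem_union_left _ hxA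
  obtain ⟨c', hc'C, hc'⟩ := mem_map.mp ((mem_union.mp hx).resolve_left hxB)
  rw [← hc, RelEmbedding.coe_toEmbedding, (Bᶜ.orderEmbOfFin hB).injective.eq_iff] at hc'
  exact (mem_erase.mp (hCc (hc' ▸ hc'C))).1 rfl

theorem prolific_hereditary_general {n k : ℕ} (hkn : k < n)
    (σ : Equiv.Perm (Fin n)) (h : IsProlific k σ) :
    ∀ j : ℕ, 1 ≤ j → j < k → IsProlific j σ :=
  fun _ _ hjk => h.of_le hjk.le hkn

/-- If `σ` is `k`-prolific, then `σ` is `j`-prolific for every `1 ≤ j < k`. -/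
theorem prolific_hereditary {n k : ℕ} (hk : 1 ≤ k) (hkn : k < n)
    (σ : Equiv.Perm (Fin n)) (h : IsProlific k σ) :
    ∀ j : ℕ, 1 ≤ j → j < k → IsProlific j σ :=
  prolific_hereditary_general hkn σ h

end Prolific
end

section
/- Deleting a single entry from a permutation decreases the breadth by at most one: if σ is a permutation of size n ≥ 3 and p ∈ {1,…,n}, then br(σ_⟨{p}⟩) ≥ br(σ) − 1. -/
/-!
Delete the row and column of the entry at `p` and close up the grid. A horizontal (vertical)
distance between two remaining entries shrinks by one exactly when the column (row) of `p` lies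
strictly between them, and is unchanged otherwise. So a distance drops by two only when `p` lies
inside the rectangle spanned by the two entries `a`, `b`; but then `d(a, b) = d(a, p) + d(p, b)`
is at least twice the breadth.
-/

open Finset

namespace Fin

variable {m : ℕ}

lemma val_succAbove (q : Fin (m + 1)) (x : Fin m) :
    (q.succAbove x : ℕ) = if (x : ℕ) < q then (x : ℕ) else x + 1 := by
  rcases lt_or_ge (castSucc x) q with hx | hx
  · have hx' : (x : ℕ) < q := hx
    rw [succAbove_of_castSucc_lt _ _ hx, val_castSucc, if_pos hx']
  · have hx' : ¬(x : ℕ) < q := not_lt.2 hx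
    rw [succAbove_of_le_castSucc _ _ hx, val_succ, if_neg hx']

lemma dist_succAbove_succAbove (q : Fin (m + 1)) (x y : Fin m) :
    Nat.dist (q.succAbove x) (q.succAbove y) = Nat.dist x y ∨
      (Nat.dist (q.succAbove x) (q.succAbove y) = Nat.dist x y + 1 ∧
        Nat.dist (q.succAbove x) q + Nat.dist q (q.succAbove y) =
          Nat.dist (q.succAbove x) (q.succAbove y)) := by
  simp only [val_succAbove, Nat.dist]
  split_ifs <;> omega

end Fin

namespace Prolific

variable {n m : ℕ}

lemma image_compl_singleton (σ : Equiv.Perm (Fin n)) (p : Fin n) :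
    ({p}ᶜ : Finset (Fin n)).image σ = {σ p}ᶜ := by
  ext y
  simp only [mem_image, mem_compl, mem_singleton]
  refine ⟨?_, fun hy => ⟨σ.symm y, ?_, σ.apply_symm_apply y⟩⟩
  · rintro ⟨x, hx, rfl⟩
    exact σ.injective.ne hx
  · rintro rfl
    simp at hy

lemma orderEmbOfFin_pattern_apply (σ : Equiv.Perm (Fin n)) (A : Finset (Fin n))
    (h : Aᶜ.card = m) (hσ : (Aᶜ.image σ).card = m) (i : Fin m) :
    (Aᶜ.image σ).orderEmbOfFin hσ (pattern σ A h i) = σ (Aᶜ.orderEmbOfFin h i) := by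
  rw [← coe_orderIsoOfFin_apply, ← coe_orderIsoOfFin_apply, pattern]
  simp

theorem pattern_singleton_succAbove (σ : Equiv.Perm (Fin (m + 1))) (p : Fin (m + 1))
    (h : ({p}ᶜ : Finset (Fin (m + 1))).card = m) (i : Fin m) :
    σ (p.succAbove i) = (σ p).succAbove (pattern σ {p} h i) := by
  have hσ : (({p}ᶜ : Finset (Fin (m + 1))).image σ).card = m := by
    rw [card_image_of_injective _ σ.injective, h]
  have := orderEmbOfFin_pattern_apply σ {p} h hσ i
  simp only [orderEmbOfFin_compl_singleton_apply, image_compl_singleton] at this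
  simpa using this.symm

lemma breadth_le_dperm (σ : Equiv.Perm (Fin n)) {i j : Fin n} (hij : i ≠ j) :
    breadth σ ≤ dperm σ i j :=
  Nat.sInf_le ⟨i, j, hij, rfl⟩

lemma le_breadth {σ : Equiv.Perm (Fin n)} (hn : 2 ≤ n) {b : ℕ}
    (h : ∀ i j, i ≠ j → b ≤ dperm σ i j) : b ≤ breadth σ := by
  have hne : (⟨0, by omega⟩ : Fin n) ≠ ⟨1, by omega⟩ := by simp
  refine le_csInf ⟨_, _, _, hne, rfl⟩ ?_
  rintro _ ⟨i, j, hij, rfl⟩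
  exact h i j hij

theorem breadth_sub_one_le_dperm_pattern (σ : Equiv.Perm (Fin (m + 1))) (p : Fin (m + 1))
    (h : ({p}ᶜ : Finset (Fin (m + 1))).card = m) {i j : Fin m} (hij : i ≠ j) :
    breadth σ - 1 ≤ dperm (pattern σ {p} h) i j := by
  have hab := breadth_le_dperm σ ((Fin.succAbove_right_injective (p := p)).ne hij)
  have hap := breadth_le_dperm σ (Fin.succAbove_ne p i)
  have hpb := breadth_le_dperm σ (Fin.ne_succAbove p j)
  simp only [dperm, pattern_singleton_succAbove σ p h] at hab hap hpb ⊢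
  rcases Fin.dist_succAbove_succAbove p i j with _ | ⟨_, _⟩ <;>
  rcases Fin.dist_succAbove_succAbove (σ p) (pattern σ {p} h i) (pattern σ {p} h j)
    with _ | ⟨_, _⟩ <;> omega

/-- Deleting a single entry from a permutation decreases the breadth by at most one. -/
theorem breadth_delete_one {n : ℕ} (hn : 3 ≤ n) (σ : Equiv.Perm (Fin n)) (p : Fin n)
    (h : ({p}ᶜ : Finset (Fin n)).card = n - 1) :
    breadth σ - 1 ≤ breadth (pattern σ ({p} : Finset (Fin n)) h) := by
  obtain ⟨m, rfl⟩ : ∃ m, n = m + 1 := ⟨n - 1, by omega⟩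
  exact le_breadth (by omega) fun i j hij => breadth_sub_one_le_dperm_pattern σ p h hij

end Prolific
end

section
/- Let n > k ≥ 1 and let σ be a permutation of size n. If there exist distinct indices i, j with d_σ(i,j) = |i−j| + |σ(i)−σ(j)| < k + 2, then σ is not k-prolific; that is, there exist distinct k-element subsets A, B of {1,…,n} with σ_⟨A⟩ = σ_⟨B⟩. -/
open Finset

namespace Prolific

/-!
Let `C₀` be the set of entries lying strictly between the `i`th and `j`th ones in position or in
value. The two gaps have lengths summing to `dperm σ i j ≤ k + 1` and each contains one entry
fewer than its length, so `|C₀| ≤ k - 1`; pad `C₀` to a set `C` of `k - 1` entries avoiding `i`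
and `j`. Deleting `C ∪ {i}` or `C ∪ {j}` leaves the same pattern: the swap `i ↔ j` matches the
two sets of surviving entries, and since no surviving entry separates `i` from `j` in position
or in value, it preserves both orders.
-/

theorem _root_.Equiv.Perm.eq_of_lt_iff_lt {α : Type*} [LinearOrder α] [Finite α]
    {π ρ : Equiv.Perm α} (h : ∀ s t, π s < π t ↔ ρ s < ρ t) : π = ρ := by
  have hmono : StrictMono (π ∘ ρ.symm) := fun u v huv => (h _ _).2 (by simpa using huv)
  ext s
  simpa using congrFun hmono.eq_id (ρ s)

theorem _root_.Function.Injective.swap_lt_swap_iff {α β : Type*} [DecidableEq α] [LinearOrder β]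
    {f : α → β} (hf : Function.Injective f) {i j x y : α} (hxi : x ≠ i) (hyi : y ≠ i)
    (hx : x ≠ j → (f x < f i ↔ f x < f j)) (hy : y ≠ j → (f y < f i ↔ f y < f j)) :
    f (Equiv.swap i j x) < f (Equiv.swap i j y) ↔ f x < f y := by
  have := hf.ne hxi
  have := hf.ne hyi
  by_cases hxj : x = j <;> by_cases hyj : y = j
  · simp [hxj, hyj]
  · have := hf.ne hyj
    grind [Equiv.swap_apply_right, Equiv.swap_apply_of_ne_of_ne]
  · have := hf.ne hxj
    grind [Equiv.swap_apply_right, Equiv.swap_apply_of_ne_of_ne]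
  · rw [Equiv.swap_apply_of_ne_of_ne hxi hxj, Equiv.swap_apply_of_ne_of_ne hyi hyj]

variable {n : ℕ}

theorem pattern_lt_pattern_iff {m : ℕ} (σ : Equiv.Perm (Fin n)) (A : Finset (Fin n))
    (h : Aᶜ.card = m) (s t : Fin m) :
    pattern σ A h s < pattern σ A h t ↔
      σ (Aᶜ.orderEmbOfFin h s) < σ (Aᶜ.orderEmbOfFin h t) := by
  simp only [pattern, Equiv.trans_apply]
  exact OrderIso.lt_iff_lt ((Aᶜ.image σ).orderIsoOfFin
    (by rw [card_image_of_injective _ σ.injective, h])).symm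

theorem pattern_eq_pattern_of_mapsTo {σ : Equiv.Perm (Fin n)} {A B : Finset (Fin n)} {m : ℕ}
    (hA : Aᶜ.card = m) (hB : Bᶜ.card = m) {w : Fin n → Fin n}
    (hmaps : Set.MapsTo w ↑Aᶜ ↑Bᶜ) (hmono : StrictMonoOn w ↑Aᶜ)
    (hval : ∀ x ∈ Aᶜ, ∀ y ∈ Aᶜ, σ (w x) < σ (w y) ↔ σ x < σ y) :
    pattern σ A hA = pattern σ B hB := by
  have hmem (s : Fin m) : Aᶜ.orderEmbOfFin hA s ∈ Aᶜ := Aᶜ.orderEmbOfFin_mem hA s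
  have hw : w ∘ Aᶜ.orderEmbOfFin hA = Bᶜ.orderEmbOfFin hB :=
    orderEmbOfFin_unique hB (fun s => hmaps (hmem s))
      fun s t hst => hmono (hmem s) (hmem t) ((Aᶜ.orderEmbOfFin hA).strictMono hst)
  refine Equiv.Perm.eq_of_lt_iff_lt fun s t => ?_
  rw [pattern_lt_pattern_iff, pattern_lt_pattern_iff, ← hw]
  exact (hval _ (hmem s) _ (hmem t)).symm

def between (σ : Equiv.Perm (Fin n)) (i j : Fin n) : Finset (Fin n) :=
  Ioo (min i j) (max i j) ∪ (Ioo (min (σ i) (σ j)) (max (σ i) (σ j))).map σ.symm.toEmbedding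

theorem card_between_add_two_le (σ : Equiv.Perm (Fin n)) {i j : Fin n} (hij : i ≠ j) :
    (between σ i j).card + 2 ≤ dperm σ i j := by
  have := Fin.val_ne_of_ne hij
  have := Fin.val_ne_of_ne (σ.injective.ne hij)
  have := card_union_le (Ioo (min i j) (max i j))
    ((Ioo (min (σ i) (σ j)) (max (σ i) (σ j))).map σ.symm.toEmbedding)
  rw [card_map, Fin.card_Ioo, Fin.card_Ioo] at this
  simp only [between, dperm, Nat.dist, Fin.coe_min, Fin.coe_max] at this ⊢
  omega

theorem lt_iff_lt_of_notMem_between {σ : Equiv.Perm (Fin n)} {i j x : Fin n}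
    (hx : x ∉ between σ i j) (hxi : x ≠ i) (hxj : x ≠ j) :
    (x < i ↔ x < j) ∧ (σ x < σ i ↔ σ x < σ j) := by
  have := Fin.val_ne_of_ne hxi
  have := Fin.val_ne_of_ne hxj
  have := Fin.val_ne_of_ne (σ.injective.ne hxi)
  have := Fin.val_ne_of_ne (σ.injective.ne hxj)
  simp only [between, mem_union, mem_Ioo, mem_map_equiv, Equiv.symm_symm, Fin.lt_def,
    Fin.coe_min, Fin.coe_max, not_or] at hx ⊢
  omega

theorem between_subset_compl_pair (σ : Equiv.Perm (Fin n)) (i j : Fin n) :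
    between σ i j ⊆ {i, j}ᶜ := by
  intro x hx
  simp only [between, mem_union, mem_Ioo, mem_map_equiv, Equiv.symm_symm, mem_compl,
    mem_insert, mem_singleton] at hx ⊢
  rintro (rfl | rfl) <;> grind

theorem patternEq_insert_insert {σ : Equiv.Perm (Fin n)} {i j : Fin n} (hij : i ≠ j)
    {C : Finset (Fin n)} (hC : between σ i j ⊆ C) (hi : i ∉ C) (hj : j ∉ C) :
    PatternEq σ (insert i C) (insert j C) := by
  have hkept {x : Fin n} (hx : x ∈ (insert i C)ᶜ) : x ≠ i ∧ x ∉ between σ i j := by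
    rw [mem_compl, mem_insert, not_or] at hx
    exact ⟨hx.1, fun h => hx.2 (hC h)⟩
  have hsep {x : Fin n} (hx : x ∈ (insert i C)ᶜ) (hxj : x ≠ j) :
      (x < i ↔ x < j) ∧ (σ x < σ i ↔ σ x < σ j) :=
    lt_iff_lt_of_notMem_between (hkept hx).2 (hkept hx).1 hxj
  refine ⟨_, rfl, by rw [card_compl, card_compl, card_insert_of_notMem hi,
    card_insert_of_notMem hj], pattern_eq_pattern_of_mapsTo _ _ (w := Equiv.swap i j) ?_ ?_ ?_⟩
  · intro x hx
    have := hkept hx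
    simp only [coe_compl, coe_insert, Set.mem_compl_iff, Set.mem_insert_iff, mem_coe,
      not_or] at hx ⊢
    grind [Equiv.swap_apply_right, Equiv.swap_apply_of_ne_of_ne]
  · intro x hx y hy hxy
    exact (Function.injective_id.swap_lt_swap_iff (hkept hx).1 (hkept hy).1
      (fun hxj => (hsep hx hxj).1) (fun hyj => (hsep hy hyj).1)).2 hxy
  · intro x hx y hy
    exact σ.injective.swap_lt_swap_iff (hkept hx).1 (hkept hy).1
      (fun hxj => (hsep hx hxj).2) (fun hyj => (hsep hy hyj).2)

theorem not_prolific_of_close_general {n k : ℕ} (hkn : k < n)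
    (σ : Equiv.Perm (Fin n)) (i j : Fin n) (hij : i ≠ j)
    (hd : dperm σ i j < k + 2) :
    ∃ A B : Finset (Fin n), A.card = k ∧ B.card = k ∧ A ≠ B ∧ PatternEq σ A B := by
  have hS := card_between_add_two_le σ hij
  have hpair : ({i, j}ᶜ : Finset (Fin n)).card = n - 2 := by
    rw [card_compl, card_pair hij, Fintype.card_fin]
  obtain ⟨C, hSC, hCij, hC⟩ := exists_subsuperset_card_eq (between_subset_compl_pair σ i j)
    (n := k - 1) (by omega) (by omega)
  have hi : i ∉ C := fun h => by simpa using hCij h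
  have hj : j ∉ C := fun h => by simpa using hCij h
  refine ⟨insert i C, insert j C, ?_, ?_, ?_, patternEq_insert_insert hij hSC hi hj⟩
  · rw [card_insert_of_notMem hi]; omega
  · rw [card_insert_of_notMem hj]; omega
  · exact fun h => hi ((mem_insert.1 (h ▸ mem_insert_self i C)).resolve_left hij)

/-- If two distinct entries of `σ` are at distance less than `k + 2`, then `σ` is not
`k`-prolific: some two distinct `k`-element sets of positions yield the same pattern. -/
theorem not_prolific_of_close {n k : ℕ} (hk : 1 ≤ k) (hkn : k < n)
    (σ : Equiv.Perm (Fin n)) (i j : Fin n) (hij : i ≠ j)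
    (hd : dperm σ i j < k + 2) :
    ∃ A B : Finset (Fin n), A.card = k ∧ B.card = k ∧ A ≠ B ∧ PatternEq σ A B :=
  not_prolific_of_close_general hkn σ i j hij hd

end Prolific
end

section
/- For any permutation σ of size n ≥ 2 and any distinct indices i, j, one has d_σ(i,j) = 2 + |span(i,j)| + |central span(i,j)|. -/
/-!
Counting coordinates: `|i - j| - 1` indices lie strictly between `i` and `j` in position and
`|σ i - σ j| - 1` lie strictly between them in value. The span is the union of these two sets
and the central span their intersection, so inclusion–exclusion gives the identity.
-/

open Finset

namespace Prolific

/-- The span of `i` and `j` in `σ`: entries (other than `i` and `j`) whose position lies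
strictly between `i` and `j` or whose value lies strictly between `σ i` and `σ j`. -/
def span {n : ℕ} (σ : Equiv.Perm (Fin n)) (i j : Fin n) : Finset (Fin n) :=
  univ.filter fun p => p ≠ i ∧ p ≠ j ∧
    (((i < p ∧ p < j) ∨ (j < p ∧ p < i)) ∨
      ((σ i < σ p ∧ σ p < σ j) ∨ (σ j < σ p ∧ σ p < σ i)))

/-- The central span of `i` and `j` in `σ`: entries whose position lies strictly between
`i` and `j` and whose value lies strictly between `σ i` and `σ j`. -/
def centralSpan {n : ℕ} (σ : Equiv.Perm (Fin n)) (i j : Fin n) : Finset (Fin n) :=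
  univ.filter fun p =>
    ((i < p ∧ p < j) ∨ (j < p ∧ p < i)) ∧
    ((σ i < σ p ∧ σ p < σ j) ∨ (σ j < σ p ∧ σ p < σ i))

section

variable {n : ℕ}

theorem card_Ioo_union_Ioo_add_one {a b : Fin n} (hab : a ≠ b) :
    #(Ioo a b ∪ Ioo b a) + 1 = Nat.dist a b := by
  wlog hlt : a < b generalizing a b
  · rw [union_comm, Nat.dist_comm]
    exact this hab.symm (hab.lt_or_gt.resolve_left hlt)
  have hlt' : (a : ℕ) < b := hlt
  rw [Ioo_eq_empty_of_le hlt.le, union_empty, Fin.card_Ioo, Nat.dist_eq_sub_of_le hlt'.le]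
  omega

theorem mem_Ioo_union_Ioo {a b p : Fin n} :
    p ∈ Ioo a b ∪ Ioo b a ↔ (a < p ∧ p < b) ∨ (b < p ∧ p < a) := by
  simp only [mem_union, mem_Ioo]

theorem span_eq_union (σ : Equiv.Perm (Fin n)) (i j : Fin n) :
    span σ i j = (Ioo i j ∪ Ioo j i) ∪
      (Ioo (σ i) (σ j) ∪ Ioo (σ j) (σ i)).map σ.symm.toEmbedding := by
  ext p
  simp only [span, mem_filter, mem_univ, true_and, mem_union (s := _ ∪ _), mem_map_equiv,
    Equiv.symm_symm, mem_Ioo_union_Ioo]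
  refine ⟨fun h => h.2.2, fun h => ⟨?_, ?_, h⟩⟩ <;> rintro rfl <;> simp_all

theorem centralSpan_eq_inter (σ : Equiv.Perm (Fin n)) (i j : Fin n) :
    centralSpan σ i j = (Ioo i j ∪ Ioo j i) ∩
      (Ioo (σ i) (σ j) ∪ Ioo (σ j) (σ i)).map σ.symm.toEmbedding := by
  ext p
  simp only [centralSpan, mem_filter, mem_univ, true_and, mem_inter, mem_map_equiv,
    Equiv.symm_symm, mem_Ioo_union_Ioo]

end

theorem dperm_eq_span_add_centralSpan_general {n : ℕ} (σ : Equiv.Perm (Fin n))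
    (i j : Fin n) (hij : i ≠ j) :
    dperm σ i j = 2 + (span σ i j).card + (centralSpan σ i j).card := by
  have hσ : σ i ≠ σ j := σ.injective.ne hij
  rw [dperm, ← card_Ioo_union_Ioo_add_one hij, ← card_Ioo_union_Ioo_add_one hσ,
    span_eq_union, centralSpan_eq_inter, add_assoc _ #(_ ∪ _), card_union_add_card_inter,
    card_map]
  ring

/-- `d_σ(i,j) = 2 + |span(i,j)| + |central span(i,j)|`. -/
theorem dperm_eq_span_add_centralSpan {n : ℕ} (hn : 2 ≤ n) (σ : Equiv.Perm (Fin n))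
    (i j : Fin n) (hij : i ≠ j) :
    dperm σ i j = 2 + (span σ i j).card + (centralSpan σ i j).card :=
  dperm_eq_span_add_centralSpan_general σ i j hij

end Prolific
end

section
/- Let k ≥ 1 be odd, let m = (k² + 4k + 3)/2, and let σ_k be the permutation of {1,…,m} given by σ_k(i) = i(k+2) mod (m+1). Then for all distinct i, j ∈ {1,…,m}, |i−j| + |σ_k(i)−σ_k(j)| ≥ k + 2 (i.e., br(σ_k) ≥ k+2); consequently σ_k is a k-prolific permutation of size ⌈k²/2 + 2k + 1⌉. -/
/-!
Write `k = 2u + 1`, so that `m + 1 = 2u² + 6u + 5 = ((k + 2)² + 1) / 2`. The entries `(i, σ i)` lie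
on the lattice `{(x, y) : y ≡ (k + 2) x [MOD m + 1]}`, which has the orthogonal basis
`(u + 1, -(u + 2))`, `(u + 2, u + 1)` of squared length `m + 1`. Hence two entries that are within
`k` of each other in both coordinates differ by `±(u + 1, -(u + 2))` or `±(u + 2, u + 1)`, and the
breadth is `k + 2`.

If `σ_⟨A⟩ = σ_⟨B⟩`, match the `t`-th surviving entry for `A` with the `t`-th one for `B`. Matched
entries are at most `k` apart in each coordinate, so distinct ones differ by one of these four
steps. Both coordinates of a step exceed `k / 2`, which forces all moved pairs to move in the same
horizontal and the same vertical direction. The first moved pair in position order and the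
extreme moved pair in value order then leave a window of `u + 2` consecutive positions and one of
`u + 1` consecutive values (or the reverse) that are deleted by `B`; by the breadth bound the two
windows share at most one entry, so `|B| ≥ k + 1`.
-/

open Finset

namespace Prolific

section StrictMonoPair

variable {N M : ℕ} {C D : Fin N → Fin M}

theorem val_le_val_of_strictMono (hC : StrictMono C) (t : Fin N) : (t : ℕ) ≤ C t := by
  simpa using card_le_card_of_injOn C (s := Iio t) (t := Iio (C t))
    (fun s hs ↦ by simpa using hC (by simpa using hs)) hC.injective.injOn

theorem val_le_val_add_of_strictMono (hC : StrictMono C) (t : Fin N) :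
    (C t : ℕ) ≤ t + (M - N) := by
  have := card_le_card_of_injOn C (s := Ioi t) (t := Ioi (C t))
    (fun s hs ↦ by simpa using hC (by simpa using hs)) hC.injective.injOn
  simp only [Fin.card_Ioi] at this
  omega

theorem val_sub_val_le_of_strictMono (hC : StrictMono C) (t t' : Fin N) :
    (t' : ℕ) - t ≤ (C t' : ℕ) - C t := by
  have := card_le_card_of_injOn C (s := Ico t t') (t := Ico (C t) (C t'))
    (fun s hs ↦ by
      simp only [coe_Ico, Set.mem_Ico] at hs ⊢
      exact ⟨hC.monotone hs.1, hC hs.2⟩) hC.injective.injOn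
  simpa only [Fin.card_Ico] using this

theorem dist_le_of_strictMono (hC : StrictMono C) (hD : StrictMono D) (t : Fin N) :
    Nat.dist (C t) (D t) ≤ M - N := by
  have := val_le_val_of_strictMono hC t
  have := val_le_val_add_of_strictMono hC t
  have := val_le_val_of_strictMono hD t
  have := val_le_val_add_of_strictMono hD t
  unfold Nat.dist
  omega

theorem two_mul_le_of_lt_of_lt (hC : StrictMono C) (hD : StrictMono D) {t t' : Fin N}
    (htt' : t < t') {h : ℕ} (ht : (C t : ℕ) + h ≤ D t) (ht' : (D t' : ℕ) + h ≤ C t') :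
    2 * h ≤ M - N := by
  -- `C s - s` and `D s - s` are monotone in `s`, with values in `[0, M - N]`
  have := val_le_val_of_strictMono hC t
  have := val_le_val_add_of_strictMono hC t'
  have := val_sub_val_le_of_strictMono hD t t'
  have : (t : ℕ) < t' := htt'
  omega

theorem lt_or_lt_of_strictMono (hC : StrictMono C) (hD : StrictMono D) {h : ℕ}
    (hMN : M - N < 2 * h) (hgap : ∀ t, C t ≠ D t → h ≤ Nat.dist (C t) (D t)) :
    (∀ t, C t ≠ D t → C t < D t) ∨ (∀ t, C t ≠ D t → D t < C t) := by
  by_contra! ⟨⟨s, hs, hDs⟩, ⟨t, ht, hCt⟩⟩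
  have hgs := hgap s hs
  have hgt := hgap t ht
  have hDs' : (D s : ℕ) < C s := lt_of_le_of_ne hDs (Fin.val_ne_of_ne hs.symm)
  have hCt' : (C t : ℕ) < D t := lt_of_le_of_ne hCt (Fin.val_ne_of_ne ht)
  unfold Nat.dist at hgs hgt
  rcases lt_or_gt_of_ne (show s ≠ t by rintro rfl; omega) with hst | hts
  · have := two_mul_le_of_lt_of_lt hD hC hst (h := h) (by omega) (by omega)
    omega
  · have := two_mul_le_of_lt_of_lt hC hD hts (h := h) (by omega) (by omega)
    omega

theorem card_le_of_forall_notMem_range (hD : Function.Injective D) {F : Finset (Fin M)}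
    (hF : ∀ z ∈ F, z ∉ Set.range D) : F.card ≤ M - N := by
  have := card_le_card (show F ⊆ (univ.image D)ᶜ from fun z hz ↦ by simpa using hF z hz)
  simpa [card_compl, card_image_of_injective _ hD] using this

end StrictMonoPair

section FirstDifference

variable {ι α : Type*} [LinearOrder ι] [Preorder α] {C D : ι → α}

theorem exists_ne_forall_Ico_notMem_range [WellFoundedLT ι] (hC : StrictMono C)
    (hD : StrictMono D) (hne : ∃ t, C t ≠ D t) :
    ∃ t, C t ≠ D t ∧ ∀ z, C t ≤ z → z < D t → z ∉ Set.range D := by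
  obtain ⟨t, ht, hmin⟩ := wellFounded_lt.has_min {t | C t ≠ D t} hne
  refine ⟨t, ht, fun z hz hz' ⟨s, hs⟩ ↦ ?_⟩
  subst hs
  rcases lt_or_ge s t with hst | hts
  · have hCD : C s = D s := not_not.mp fun h ↦ hmin s h hst
    exact (hCD ▸ hC hst).not_ge hz
  · exact (hz'.trans_le (hD.monotone hts)).false

theorem exists_ne_forall_Ioc_notMem_range [WellFoundedGT ι] (hC : StrictMono C)
    (hD : StrictMono D) (hne : ∃ t, C t ≠ D t) :
    ∃ t, C t ≠ D t ∧ ∀ z, D t < z → z ≤ C t → z ∉ Set.range D := by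
  obtain ⟨t, ht, h⟩ :=
    exists_ne_forall_Ico_notMem_range (ι := ιᵒᵈ) (α := αᵒᵈ) hC.dual hD.dual hne
  exact ⟨t, ht, fun z hz hz' ↦ h z hz' hz⟩

end FirstDifference

theorem dist_lt_card_Ico {M : ℕ} {a b i j : Fin M} (hi : i ∈ Ico a b) (hj : j ∈ Ico a b) :
    Nat.dist i j < (Ico a b).card := by
  simp only [mem_Ico, Fin.le_def, Fin.lt_def] at hi hj
  rw [Fin.card_Ico, Nat.dist]
  omega

theorem dist_lt_card_Ioc {M : ℕ} {a b i j : Fin M} (hi : i ∈ Ioc a b) (hj : j ∈ Ioc a b) :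
    Nat.dist i j < (Ioc a b).card := by
  simp only [mem_Ioc, Fin.le_def, Fin.lt_def] at hi hj
  rw [Fin.card_Ioc, Nat.dist]
  omega

theorem card_add_card_le_of_le_dperm {M c : ℕ} {σ : Equiv.Perm (Fin M)}
    (hσ : ∀ i j, i ≠ j → c ≤ dperm σ i j) {P S : Finset (Fin M)}
    (hP : ∀ i ∈ P, ∀ j ∈ P, Nat.dist i j < P.card)
    (hS : ∀ v ∈ S, ∀ w ∈ S, Nat.dist v w < S.card) (hc : P.card + S.card ≤ c + 1) :
    P.card + S.card ≤ (P ∪ S.map σ.symm.toEmbedding).card + 1 := by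
  have hinter : (P ∩ S.map σ.symm.toEmbedding).card ≤ 1 := by
    refine card_le_one.mpr fun i hi j hj ↦ by_contra fun hij ↦ ?_
    simp only [mem_inter, mem_map_equiv, Equiv.symm_symm] at hi hj
    have := hσ i j hij
    have := hP i hi.1 j hj.1
    have := hS _ hi.2 _ hj.2
    unfold dperm at *
    omega
  have := card_union_add_card_inter P (S.map σ.symm.toEmbedding)
  rw [card_map] at this
  omega

/-- The vectors `(x, y)` with `0 < |x| ≤ 2u + 1`, `|y| ≤ 2u + 1` and
`y ≡ (2u + 3) x [ZMOD 2u² + 6u + 5]`. -/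
def latticeSteps (u : ℕ) : Set (ℤ × ℤ) :=
  {((u : ℤ) + 1, -((u : ℤ) + 2)), (-((u : ℤ) + 1), (u : ℤ) + 2), ((u : ℤ) + 2, (u : ℤ) + 1),
    (-((u : ℤ) + 2), -((u : ℤ) + 1))}

theorem mem_latticeSteps_iff {u : ℕ} {x y : ℤ} :
    (x, y) ∈ latticeSteps u ↔ x = u + 1 ∧ y = -(u + 2) ∨ x = -(u + 1) ∧ y = u + 2 ∨
      x = u + 2 ∧ y = u + 1 ∨ x = -(u + 2) ∧ y = -(u + 1) := by
  simp only [latticeSteps, Set.mem_insert_iff, Set.mem_singleton_iff, Prod.mk.injEq]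

theorem mem_latticeSteps_of_modEq {u : ℕ} {x y : ℤ} (hx : |x| ≤ 2 * u + 1)
    (hy : |y| ≤ 2 * u + 1) (hx0 : x ≠ 0)
    (h : y ≡ (2 * u + 3) * x [ZMOD 2 * u ^ 2 + 6 * u + 5]) : (x, y) ∈ latticeSteps u := by
  obtain ⟨c, hc⟩ := Int.modEq_iff_dvd.mp h.symm
  -- `(u + 1, -(u + 2))` and `(u + 2, u + 1)` are an orthogonal basis of the lattice of solutions,
  -- both of squared length `2u² + 6u + 5`
  obtain ⟨a, b, hxab, hyab⟩ : ∃ a b : ℤ, x = a * (u + 1) + b * (u + 2) ∧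
      y = b * (u + 1) - a * (u + 2) :=
    ⟨-(u + 2) * c - x, (u + 1) * c + x, by ring, by linear_combination hc⟩
  have hnorm : (a ^ 2 + b ^ 2) * (2 * u ^ 2 + 6 * u + 5) = x ^ 2 + y ^ 2 := by
    rw [hxab, hyab]; ring
  have hx2 : x ^ 2 ≤ (2 * u + 1) ^ 2 := sq_le_sq' (abs_le.mp hx).1 (abs_le.mp hx).2
  have hy2 : y ^ 2 ≤ (2 * u + 1) ^ 2 := sq_le_sq' (abs_le.mp hy).1 (abs_le.mp hy).2
  have hab : a ^ 2 + b ^ 2 < 4 := by nlinarith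
  have ha : |a| ≤ 1 := by nlinarith [sq_abs a, abs_nonneg a, sq_nonneg b]
  have hb : |b| ≤ 1 := by nlinarith [sq_abs b, abs_nonneg b, sq_nonneg a]
  rw [abs_le] at hx hy ha hb
  obtain ⟨ha₁, ha₂⟩ := ha
  obtain ⟨hb₁, hb₂⟩ := hb
  rw [mem_latticeSteps_iff]
  interval_cases a <;> interval_cases b <;> omega

def IsLatticePerm {M : ℕ} (u : ℕ) (σ : Equiv.Perm (Fin M)) : Prop :=
  ∀ i j : Fin M, i ≠ j → Nat.dist i j ≤ 2 * u + 1 → Nat.dist (σ i) (σ j) ≤ 2 * u + 1 →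
    ((j : ℤ) - i, (σ j : ℤ) - σ i) ∈ latticeSteps u

theorem isLatticePerm_of_mul {u M : ℕ} (hM : M = 2 * u ^ 2 + 6 * u + 4)
    (σ : Equiv.Perm (Fin M))
    (hσ : ∀ i : Fin M, (σ i : ℕ) + 1 = (((i : ℕ) + 1) * (2 * u + 3)) % (M + 1)) :
    IsLatticePerm u σ := by
  have hcong (i : Fin M) :
      (σ i : ℤ) + 1 ≡ (i + 1) * (2 * u + 3) [ZMOD 2 * u ^ 2 + 6 * u + 5] := by
    have := congrArg (Nat.cast : ℕ → ℤ) (hσ i)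
    push_cast [hM] at this
    rw [this, show (2 * u ^ 2 + 6 * u + 4 + 1 : ℤ) = 2 * u ^ 2 + 6 * u + 5 by ring]
    exact Int.mod_modEq _ _
  intro i j hij hx hy
  unfold Nat.dist at hx hy
  refine mem_latticeSteps_of_modEq (abs_le.mpr ⟨by omega, by omega⟩)
    (abs_le.mpr ⟨by omega, by omega⟩)
    (sub_ne_zero.mpr (by exact_mod_cast Fin.val_ne_of_ne hij.symm)) ?_
  calc (σ j : ℤ) - σ i = ((σ j : ℤ) + 1) - ((σ i : ℤ) + 1) := by ring
    _ ≡ (j + 1) * (2 * u + 3) - (i + 1) * (2 * u + 3) [ZMOD 2 * u ^ 2 + 6 * u + 5] :=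
      (hcong j).sub (hcong i)
    _ = (2 * u + 3) * ((j : ℤ) - i) := by ring

theorem IsLatticePerm.le_dperm {M u : ℕ} {σ : Equiv.Perm (Fin M)} (hσ : IsLatticePerm u σ)
    {i j : Fin M} (hij : i ≠ j) : 2 * u + 3 ≤ dperm σ i j := by
  have hi : (i : ℕ) ≠ j := Fin.val_ne_of_ne hij
  have hσi : (σ i : ℕ) ≠ σ j := Fin.val_ne_of_ne (σ.injective.ne hij)
  unfold dperm
  by_cases hx : Nat.dist i j ≤ 2 * u + 1 <;> by_cases hy : Nat.dist (σ i) (σ j) ≤ 2 * u + 1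
  · have := mem_latticeSteps_iff.mp (hσ i j hij hx hy)
    unfold Nat.dist
    omega
  all_goals unfold Nat.dist at *; omega

/-- Models `σ_⟨A⟩ = σ_⟨B⟩`: `pos₁`, `pos₂` enumerate the kept positions `Aᶜ`, `Bᶜ`, `val₁`, `val₂`
enumerate their images under `σ`, and `π` is the common pattern. -/
structure OccurrencePair {M : ℕ} (σ : Equiv.Perm (Fin M)) (N : ℕ) where
  pos₁ : Fin N ↪o Fin M
  pos₂ : Fin N ↪o Fin M
  val₁ : Fin N ↪o Fin M
  val₂ : Fin N ↪o Fin M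
  π : Equiv.Perm (Fin N)
  apply_pos₁ : ∀ t, σ (pos₁ t) = val₁ (π t)
  apply_pos₂ : ∀ t, σ (pos₂ t) = val₂ (π t)

namespace OccurrencePair

variable {M N u : ℕ} {σ : Equiv.Perm (Fin M)} (O : OccurrencePair σ N)

def symm : OccurrencePair σ N where
  pos₁ := O.pos₂
  pos₂ := O.pos₁
  val₁ := O.val₂
  val₂ := O.val₁
  π := O.π
  apply_pos₁ := O.apply_pos₂
  apply_pos₂ := O.apply_pos₁

theorem val₁_ne_val₂_iff {t : Fin N} :
    O.val₁ (O.π t) ≠ O.val₂ (O.π t) ↔ O.pos₁ t ≠ O.pos₂ t := by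
  rw [← O.apply_pos₁, ← O.apply_pos₂, σ.injective.ne_iff]

theorem step_mem (hM : M = N + (2 * u + 1)) (hσ : IsLatticePerm u σ) {t : Fin N}
    (ht : O.pos₁ t ≠ O.pos₂ t) :
    ((O.pos₂ t : ℤ) - O.pos₁ t, (σ (O.pos₂ t) : ℤ) - σ (O.pos₁ t)) ∈ latticeSteps u := by
  refine hσ _ _ ht ?_ ?_
  · exact (dist_le_of_strictMono O.pos₁.strictMono O.pos₂.strictMono t).trans (by omega)
  · rw [O.apply_pos₁, O.apply_pos₂]
    exact (dist_le_of_strictMono O.val₁.strictMono O.val₂.strictMono _).trans (by omega)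

theorem pos_lt_or_lt (hM : M = N + (2 * u + 1)) (hσ : IsLatticePerm u σ) :
    (∀ t, O.pos₁ t ≠ O.pos₂ t → O.pos₁ t < O.pos₂ t) ∨
      (∀ t, O.pos₁ t ≠ O.pos₂ t → O.pos₂ t < O.pos₁ t) := by
  refine lt_or_lt_of_strictMono O.pos₁.strictMono O.pos₂.strictMono (h := u + 1) (by omega)
    fun t ht ↦ ?_
  have := mem_latticeSteps_iff.mp (O.step_mem hM hσ ht)
  unfold Nat.dist
  omega

theorem val_lt_or_lt (hM : M = N + (2 * u + 1)) (hσ : IsLatticePerm u σ) :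
    (∀ t, O.pos₁ t ≠ O.pos₂ t → σ (O.pos₁ t) < σ (O.pos₂ t)) ∨
      (∀ t, O.pos₁ t ≠ O.pos₂ t → σ (O.pos₂ t) < σ (O.pos₁ t)) := by
  simp only [O.apply_pos₁, O.apply_pos₂]
  refine (lt_or_lt_of_strictMono O.val₁.strictMono O.val₂.strictMono (h := u + 1) (by omega)
    fun r hr ↦ ?_).imp (fun h t ht ↦ h _ (O.val₁_ne_val₂_iff.mpr ht))
      (fun h t ht ↦ h _ (O.val₁_ne_val₂_iff.mpr ht))
  obtain ⟨t, rfl⟩ := O.π.surjective r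
  have := mem_latticeSteps_iff.mp (O.step_mem hM hσ (O.val₁_ne_val₂_iff.mp hr))
  rw [O.apply_pos₁, O.apply_pos₂] at this
  unfold Nat.dist
  omega

theorem false_of_gaps (hM : M = N + (2 * u + 1)) (hσ : IsLatticePerm u σ)
    {P S : Finset (Fin M)} (hP : ∀ z ∈ P, z ∉ Set.range O.pos₂)
    (hS : ∀ v ∈ S, v ∉ Set.range O.val₂) (hPd : ∀ i ∈ P, ∀ j ∈ P, Nat.dist i j < P.card)
    (hSd : ∀ v ∈ S, ∀ w ∈ S, Nat.dist v w < S.card) (hcard : P.card + S.card = 2 * u + 3) :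
    False := by
  have hunion := card_add_card_le_of_le_dperm (fun i j hij ↦ hσ.le_dperm hij) hPd hSd
    (by omega)
  have hdeleted := card_le_of_forall_notMem_range O.pos₂.injective
    (F := P ∪ S.map σ.symm.toEmbedding) fun z hz ↦ by
      rcases mem_union.mp hz with hz | hz
      · exact hP z hz
      · rintro ⟨t, rfl⟩
        rw [mem_map_equiv, Equiv.symm_symm] at hz
        exact hS _ hz ⟨O.π t, (O.apply_pos₂ t).symm⟩
  omega

theorem false_of_pos_lt (hM : M = N + (2 * u + 1)) (hσ : IsLatticePerm u σ)
    (hne : ∃ t, O.pos₁ t ≠ O.pos₂ t) (hlt : ∀ t, O.pos₁ t ≠ O.pos₂ t → O.pos₁ t < O.pos₂ t) :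
    False := by
  have hstep {t : Fin N} (ht : O.pos₁ t ≠ O.pos₂ t) :=
    And.intro (Fin.lt_def.mp (hlt t ht)) (mem_latticeSteps_iff.mp (O.step_mem hM hσ ht))
  obtain ⟨t₀, ht₀, hgap⟩ :=
    exists_ne_forall_Ico_notMem_range O.pos₁.strictMono O.pos₂.strictMono hne
  have hP : ∀ z ∈ Ico (O.pos₁ t₀) (O.pos₂ t₀), z ∉ Set.range O.pos₂ :=
    fun z hz ↦ hgap z (mem_Ico.mp hz).1 (mem_Ico.mp hz).2
  have hPd := fun i (hi : i ∈ Ico (O.pos₁ t₀) (O.pos₂ t₀)) j (hj : j ∈ Ico _ _) ↦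
    dist_lt_card_Ico hi hj
  have hne' : ∃ r, O.val₁ r ≠ O.val₂ r := ⟨O.π t₀, O.val₁_ne_val₂_iff.mpr ht₀⟩
  have := hstep ht₀
  rcases O.val_lt_or_lt hM hσ with hval | hval
  · obtain ⟨r, hr, hS⟩ :=
      exists_ne_forall_Ico_notMem_range O.val₁.strictMono O.val₂.strictMono hne'
    obtain ⟨t, rfl⟩ := O.π.surjective r
    refine O.false_of_gaps hM hσ hP (S := Ico _ _) (fun v hv ↦ hS v (mem_Ico.mp hv).1
      (mem_Ico.mp hv).2) hPd (fun v hv w hw ↦ dist_lt_card_Ico hv hw) ?_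
    -- the pairs `t₀` and `t` both move by the step `(u + 2, u + 1)`
    have ht := O.val₁_ne_val₂_iff.mp hr
    have := hstep ht
    have := Fin.lt_def.mp (hval t₀ ht₀)
    have := Fin.lt_def.mp (hval t ht)
    simp only [Fin.card_Ico, ← O.apply_pos₁, ← O.apply_pos₂]
    omega
  · obtain ⟨r, hr, hS⟩ :=
      exists_ne_forall_Ioc_notMem_range O.val₁.strictMono O.val₂.strictMono hne'
    obtain ⟨t, rfl⟩ := O.π.surjective r
    refine O.false_of_gaps hM hσ hP (S := Ioc _ _) (fun v hv ↦ hS v (mem_Ioc.mp hv).1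
      (mem_Ioc.mp hv).2) hPd (fun v hv w hw ↦ dist_lt_card_Ioc hv hw) ?_
    -- the pairs `t₀` and `t` both move by the step `(u + 1, -(u + 2))`
    have ht := O.val₁_ne_val₂_iff.mp hr
    have := hstep ht
    have := Fin.lt_def.mp (hval t₀ ht₀)
    have := Fin.lt_def.mp (hval t ht)
    simp only [Fin.card_Ico, Fin.card_Ioc, ← O.apply_pos₁, ← O.apply_pos₂]
    omega

theorem pos₁_eq_pos₂ (hM : M = N + (2 * u + 1)) (hσ : IsLatticePerm u σ) :
    O.pos₁ = O.pos₂ := by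
  by_contra hne
  have hne : ∃ t, O.pos₁ t ≠ O.pos₂ t := by
    by_contra! h
    exact hne (DFunLike.ext _ _ h)
  rcases O.pos_lt_or_lt hM hσ with hlt | hlt
  · exact O.false_of_pos_lt hM hσ hne hlt
  · exact O.symm.false_of_pos_lt hM hσ (hne.imp fun t ↦ Ne.symm) fun t ht ↦ hlt t ht.symm

end OccurrencePair

theorem orderEmbOfFin_image_pattern {n m : ℕ} (σ : Equiv.Perm (Fin n)) (A : Finset (Fin n))
    (h : Aᶜ.card = m) (t : Fin m) :
    (Aᶜ.image σ).orderEmbOfFin ((card_image_of_injective _ σ.injective).trans h)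
      (pattern σ A h t) = σ (Aᶜ.orderEmbOfFin h t) := by
  rw [← coe_orderIsoOfFin_apply, ← coe_orderIsoOfFin_apply]
  exact congrArg Subtype.val (OrderIso.apply_symm_apply _ _)

theorem IsLatticePerm.isProlific {M u : ℕ} {σ : Equiv.Perm (Fin M)} (hσ : IsLatticePerm u σ) :
    IsProlific (2 * u + 1) σ := by
  rintro A B hA - hAB ⟨N, hcA, hcB, hpat⟩
  have hM : M = N + (2 * u + 1) := by
    have := card_compl A
    have := card_le_univ A
    simp only [Fintype.card_fin] at *
    omega
  let O : OccurrencePair σ N :=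
    { pos₁ := Aᶜ.orderEmbOfFin hcA
      pos₂ := Bᶜ.orderEmbOfFin hcB
      val₁ := (Aᶜ.image σ).orderEmbOfFin ((card_image_of_injective _ σ.injective).trans hcA)
      val₂ := (Bᶜ.image σ).orderEmbOfFin ((card_image_of_injective _ σ.injective).trans hcB)
      π := pattern σ A hcA
      apply_pos₁ := fun t ↦ (orderEmbOfFin_image_pattern σ A hcA t).symm
      apply_pos₂ := fun t ↦ hpat ▸ (orderEmbOfFin_image_pattern σ B hcB t).symm }
  have hrange := congrArg (fun e : Fin N ↪o Fin M ↦ Set.range e) (O.pos₁_eq_pos₂ hM hσ)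
  simp only [O, range_orderEmbOfFin, coe_inj] at hrange
  exact hAB (compl_injective hrange)

theorem sigma_odd_prolific_general (k : ℕ) (hodd : Odd k)
    (σ : Equiv.Perm (Fin ((k ^ 2 + 4 * k + 3) / 2)))
    (hσ : ∀ i : Fin ((k ^ 2 + 4 * k + 3) / 2),
      (σ i : ℕ) + 1 = (((i : ℕ) + 1) * (k + 2)) % ((k ^ 2 + 4 * k + 3) / 2 + 1)) :
    (∀ i j : Fin ((k ^ 2 + 4 * k + 3) / 2), i ≠ j → k + 2 ≤ dperm σ i j) ∧
    IsProlific k σ := by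
  obtain ⟨u, rfl⟩ := hodd
  have hlat : IsLatticePerm u σ := isLatticePerm_of_mul (by ring_nf; omega) σ hσ
  exact ⟨fun i j hij ↦ hlat.le_dperm hij, hlat.isProlific⟩

/-- For odd `k` and `m = (k² + 4k + 3)/2 = ⌈k²/2 + 2k + 1⌉`, the permutation `σ_k` of
`{1, …, m}` given by `σ_k(i) = i(k+2) mod (m+1)` has breadth at least `k + 2`, and is
therefore a `k`-prolific permutation of size `⌈k²/2 + 2k + 1⌉`. -/
theorem sigma_odd_prolific (k : ℕ) (hk : 1 ≤ k) (hodd : Odd k)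
    (σ : Equiv.Perm (Fin ((k ^ 2 + 4 * k + 3) / 2)))
    (hσ : ∀ i : Fin ((k ^ 2 + 4 * k + 3) / 2),
      (σ i : ℕ) + 1 = (((i : ℕ) + 1) * (k + 2)) % ((k ^ 2 + 4 * k + 3) / 2 + 1)) :
    (∀ i j : Fin ((k ^ 2 + 4 * k + 3) / 2), i ≠ j → k + 2 ≤ dperm σ i j) ∧
    IsProlific k σ :=
  sigma_odd_prolific_general k hodd σ hσ

end Prolific
end

section
/- Let k ≥ 2 be even, let m = k²/2 + 2k + 1, and let σ_k be the permutation of {1,…,m} given by σ_k(i) = i(k+1) mod (m+1). Then for all distinct i, j ∈ {1,…,m}, |i−j| + |σ_k(i)−σ_k(j)| ≥ k + 2 (i.e., br(σ_k) ≥ k+2); consequently σ_k is a k-prolific permutation of size k²/2 + 2k + 1. -/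
/-
Write `k = 2t`, so that `m + 1 = 2(t+1)²`. For entries `i, j` of `σ_k` the offset
`(i - j, σ_k(i) - σ_k(j))` has second coordinate `≡ (2t+1)·(first)` modulo `2(t+1)²`. Elementary
arithmetic then gives the breadth bound `2t + 2`, and shows that the only nonzero offsets in the
box `[-2t, 2t]²` are `±(t+1, -(t+1))` and `±(t+2, t)`, any two of which are more than `2t` apart
in some coordinate.

If `σ_⟨A⟩ = σ_⟨B⟩` with `|A| = |B| = 2t`, the `r`-th surviving entries for `A` and for `B` have
an offset in that box, and the offsets for different `r` differ by at most `2t` in each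
coordinate. Hence all moved entries are moved by one vector `(γ, δ)` with `|γ| + |δ| = 2t + 2`.
Around the first or last moved entry, `A` contains `|γ|` consecutive positions and `|δ|`
consecutive values; two entries lying in both runs would be at distance at most `2t`, so the runs
share at most one entry and `|A| ≥ 2t + 1`.
-/

open Finset

namespace Prolific

section Offset

variable {n : ℕ}

def offset (σ : Equiv.Perm (Fin n)) (i j : Fin n) : ℤ × ℤ :=
  (((i : ℕ) : ℤ) - (j : ℕ), ((σ i : ℕ) : ℤ) - (σ j : ℕ))

theorem natCast_dperm (σ : Equiv.Perm (Fin n)) (i j : Fin n) :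
    (dperm σ i j : ℤ) = |(offset σ i j).1| + |(offset σ i j).2| := by
  simp only [dperm, offset, Nat.dist]
  rw [abs_eq_max_neg, abs_eq_max_neg]
  omega

theorem abs_offset_lt (σ : Equiv.Perm (Fin n)) (i j : Fin n) :
    |(offset σ i j).1| < n ∧ |(offset σ i j).2| < n := by
  have := i.isLt; have := j.isLt; have := (σ i).isLt; have := (σ j).isLt
  simp only [offset, abs_lt]
  omega

theorem offset_fst_ne_zero {σ : Equiv.Perm (Fin n)} {i j : Fin n} (hij : i ≠ j) :
    (offset σ i j).1 ≠ 0 := by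
  simpa [offset, sub_eq_zero] using Fin.val_ne_of_ne hij

end Offset

section StrictMonoFin

variable {N n : ℕ} {f g : Fin N → Fin n}

theorem apply_add_le_apply_add (hf : StrictMono f) {r r' : Fin N} (h : r ≤ r') :
    (f r : ℕ) + r' ≤ f r' + r := by
  have := card_le_card_of_injOn f (s := Ico r r') (t := Ico (f r) (f r'))
    (fun x hx => by
      simp only [coe_Ico, Set.mem_Ico] at hx ⊢
      exact ⟨hf.monotone hx.1, hf hx.2⟩)
    hf.injective.injOn
  simp only [Fin.card_Ico] at this
  have := Fin.le_def.mp (hf.monotone h)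
  have := Fin.le_def.mp h
  omega

theorem le_apply_of_strictMono (hf : StrictMono f) (r : Fin N) : (r : ℕ) ≤ f r := by
  have := card_le_card_of_injOn f (s := Iio r) (t := Iio (f r))
    (fun x hx => by simpa using hf (by simpa using hx)) hf.injective.injOn
  simpa only [Fin.card_Iio] using this

theorem apply_add_le_of_strictMono (hf : StrictMono f) (r : Fin N) : (f r : ℕ) + N ≤ n + r := by
  have := card_le_card_of_injOn f (s := Ioi r) (t := Ioi (f r))
    (fun x hx => by simpa using hf (by simpa using hx)) hf.injective.injOn
  simp only [Fin.card_Ioi] at this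
  omega

theorem abs_apply_sub_apply_le (hf : StrictMono f) (hg : StrictMono g) (r : Fin N) :
    |((f r : ℕ) : ℤ) - (g r : ℕ)| ≤ n - N := by
  have := le_apply_of_strictMono hf r
  have := le_apply_of_strictMono hg r
  have := apply_add_le_of_strictMono hf r
  have := apply_add_le_of_strictMono hg r
  rw [abs_le]
  constructor <;> omega

theorem abs_sub_sub_le_of_strictMono (hf : StrictMono f) (hg : StrictMono g) (r r' : Fin N) :
    |(((f r : ℕ) : ℤ) - (g r : ℕ)) - (((f r' : ℕ) : ℤ) - (g r' : ℕ))| ≤ n - N := by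
  wlog h : r ≤ r' generalizing r r'
  · rw [abs_sub_comm]
    exact this r' r (le_of_not_ge h)
  have := apply_add_le_apply_add hf h
  have := apply_add_le_apply_add hg h
  have := le_apply_of_strictMono hf r
  have := le_apply_of_strictMono hg r
  have := apply_add_le_of_strictMono hf r'
  have := apply_add_le_of_strictMono hg r'
  rw [abs_le]
  constructor <;> omega

end StrictMonoFin

section Disagreement

variable {ι α : Type*} [LinearOrder ι] [LinearOrder α] {e f : ι → α} {S : Set α} {r : ι}

theorem Ico_subset_of_eqOn_Iio (he : StrictMono e) (hf : StrictMono f) (hS : Sᶜ ⊆ Set.range e)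
    (hr : Set.EqOn e f (Set.Iio r)) : Set.Ico (f r) (e r) ⊆ S := by
  rintro p ⟨h₁, h₂⟩
  by_contra hp
  obtain ⟨ρ, rfl⟩ := hS hp
  have hρ : ρ < r := he.lt_iff_lt.mp h₂
  rw [hr hρ] at h₁
  exact (hf hρ).not_ge h₁

theorem Ioc_subset_of_eqOn_Ioi (he : StrictMono e) (hf : StrictMono f) (hS : Sᶜ ⊆ Set.range e)
    (hr : Set.EqOn e f (Set.Ioi r)) : Set.Ioc (e r) (f r) ⊆ S :=
  fun _ ⟨h₁, h₂⟩ => Ico_subset_of_eqOn_Iio (ι := ιᵒᵈ) (α := αᵒᵈ) he.dual hf.dual hS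
    (fun _ hρ => hr hρ) ⟨h₂, h₁⟩

variable {β : Type*} {e f : ι → β}

theorem exists_ne_eqOn_Iio [WellFoundedLT ι] (h : e ≠ f) :
    ∃ r, e r ≠ f r ∧ Set.EqOn e f (Set.Iio r) := by
  obtain ⟨r, hr, hmin⟩ := wellFounded_lt.has_min {r | e r ≠ f r} (Function.ne_iff.mp h)
  exact ⟨r, hr, fun ρ hρ => not_not.mp fun hne => hmin ρ hne hρ⟩

theorem exists_ne_eqOn_Ioi [WellFoundedGT ι] (h : e ≠ f) :
    ∃ r, e r ≠ f r ∧ Set.EqOn e f (Set.Ioi r) :=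
  exists_ne_eqOn_Iio (ι := ιᵒᵈ) h

end Disagreement

theorem exists_interval_subset_of_forall_sub_eq {N n : ℕ} {e f : Fin N → Fin n}
    (he : StrictMono e) (hf : StrictMono f) {S : Finset (Fin n)} (hS : (↑S)ᶜ ⊆ Set.range e)
    (hne : e ≠ f) {c : ℤ}
    (hc : ∀ j, e j ≠ f j → ((e j : ℕ) : ℤ) - (f j : ℕ) = c) :
    ∃ W ⊆ S, W.card = c.natAbs ∧ ∀ w ∈ W, ∀ w' ∈ W, Nat.dist w w' < c.natAbs := by
  rcases lt_trichotomy c 0 with hc₀ | rfl | hc₀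
  · obtain ⟨j, hj, heq⟩ := exists_ne_eqOn_Ioi hne
    have hcj := hc j hj
    refine ⟨Ioc (e j) (f j), fun p hp => Ioc_subset_of_eqOn_Ioi he hf hS heq (by simpa using hp),
      by rw [Fin.card_Ioc]; omega, fun w hw w' hw' => ?_⟩
    simp only [mem_Ioc, Fin.le_def, Fin.lt_def] at hw hw'
    unfold Nat.dist
    omega
  · obtain ⟨j, hj⟩ := Function.ne_iff.mp hne
    exact absurd (Fin.ext (by have := hc j hj; omega)) hj
  · obtain ⟨j, hj, heq⟩ := exists_ne_eqOn_Iio hne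
    have hcj := hc j hj
    refine ⟨Ico (f j) (e j), fun p hp => Ico_subset_of_eqOn_Iio he hf hS heq (by simpa using hp),
      by rw [Fin.card_Ico]; omega, fun w hw w' hw' => ?_⟩
    simp only [mem_Ico, Fin.le_def, Fin.lt_def] at hw hw'
    unfold Nat.dist
    omega

theorem card_add_card_le_of_dperm_lt {n D : ℕ} {σ : Equiv.Perm (Fin n)}
    (hbr : ∀ i j, i ≠ j → D ≤ dperm σ i j) {S P W : Finset (Fin n)} (hP : P ⊆ S)
    (hW : W ⊆ S.image σ)
    (hclose : ∀ x ∈ P, ∀ y ∈ P, σ x ∈ W → σ y ∈ W → dperm σ x y < D) :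
    P.card + W.card ≤ S.card + 1 := by
  classical
  set V := W.map σ.symm.toEmbedding
  have hV : V ⊆ S := fun x hx => by
    obtain ⟨y, hy, hyx⟩ := mem_image.mp (hW (mem_map_equiv.mp hx))
    rw [Equiv.symm_symm] at hyx
    rwa [← σ.injective hyx]
  have hPV : (P ∩ V).card ≤ 1 := card_le_one.mpr fun x hx y hy => by
    simp only [V, mem_inter, mem_map_equiv, Equiv.symm_symm] at hx hy
    by_contra hxy
    exact (hclose x hx.1 y hy.1 hx.2 hy.2).not_ge (hbr x y hxy)
  calc P.card + W.card = (P ∪ V).card + (P ∩ V).card := by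
        rw [card_union_add_card_inter, card_map]
    _ ≤ S.card + 1 := add_le_add (card_le_card (union_subset hP hV)) hPV

section Matching

variable {n N : ℕ}

def valueEmb (σ : Equiv.Perm (Fin n)) (A : Finset (Fin n)) (h : Aᶜ.card = N) : Fin N ↪o Fin n :=
  (Aᶜ.image σ).orderEmbOfFin (by rw [card_image_of_injective _ σ.injective, h])

theorem apply_orderEmbOfFin_compl (σ : Equiv.Perm (Fin n)) (A : Finset (Fin n))
    (h : Aᶜ.card = N) (r : Fin N) :
    σ (Aᶜ.orderEmbOfFin h r) = valueEmb σ A h (pattern σ A h r) := by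
  simp [pattern, valueEmb, ← coe_orderIsoOfFin_apply]

theorem compl_subset_range_orderEmbOfFin_compl (A : Finset (Fin n)) (h : Aᶜ.card = N) :
    (↑A)ᶜ ⊆ Set.range (Aᶜ.orderEmbOfFin h) := by
  rw [range_orderEmbOfFin, coe_compl]

theorem compl_subset_range_valueEmb (σ : Equiv.Perm (Fin n)) (A : Finset (Fin n))
    (h : Aᶜ.card = N) : (↑(A.image σ))ᶜ ⊆ Set.range (valueEmb σ A h) := by
  intro w hw
  rw [valueEmb, range_orderEmbOfFin, coe_image]
  refine ⟨σ.symm w, mem_coe.mpr (mem_compl.mpr fun hA => hw ?_), σ.apply_symm_apply w⟩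
  exact mem_image.mpr ⟨σ.symm w, hA, σ.apply_symm_apply w⟩

theorem coe_orderEmbOfFin_compl_ne {A B : Finset (Fin n)} (hA : Aᶜ.card = N) (hB : Bᶜ.card = N)
    (hAB : A ≠ B) : ⇑(Aᶜ.orderEmbOfFin hA) ≠ ⇑(Bᶜ.orderEmbOfFin hB) := fun h =>
  hAB (compl_injective (coe_injective (by rw [← range_orderEmbOfFin Aᶜ hA, h,
    range_orderEmbOfFin])))

end Matching

section Translation

variable {n N : ℕ} {σ : Equiv.Perm (Fin n)} {A B : Finset (Fin n)} {hA : Aᶜ.card = N}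
  {hB : Bᶜ.card = N}

theorem apply_orderEmbOfFin_compl_of_pattern_eq (hpat : pattern σ A hA = pattern σ B hB)
    (r : Fin N) : σ (Bᶜ.orderEmbOfFin hB r) = valueEmb σ B hB (pattern σ A hA r) := by
  rw [hpat, apply_orderEmbOfFin_compl]

theorem abs_offset_le (hpat : pattern σ A hA = pattern σ B hB) (r : Fin N) :
    |(offset σ (Aᶜ.orderEmbOfFin hA r) (Bᶜ.orderEmbOfFin hB r)).1| ≤ n - N ∧
      |(offset σ (Aᶜ.orderEmbOfFin hA r) (Bᶜ.orderEmbOfFin hB r)).2| ≤ n - N := by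
  simp only [offset, apply_orderEmbOfFin_compl, apply_orderEmbOfFin_compl_of_pattern_eq hpat]
  exact ⟨abs_apply_sub_apply_le (OrderEmbedding.strictMono _) (OrderEmbedding.strictMono _) r,
    abs_apply_sub_apply_le (OrderEmbedding.strictMono _) (OrderEmbedding.strictMono _) _⟩

theorem abs_offset_sub_offset_le (hpat : pattern σ A hA = pattern σ B hB) (r r' : Fin N) :
    |(offset σ (Aᶜ.orderEmbOfFin hA r) (Bᶜ.orderEmbOfFin hB r)).1 -
        (offset σ (Aᶜ.orderEmbOfFin hA r') (Bᶜ.orderEmbOfFin hB r')).1| ≤ n - N ∧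
      |(offset σ (Aᶜ.orderEmbOfFin hA r) (Bᶜ.orderEmbOfFin hB r)).2 -
        (offset σ (Aᶜ.orderEmbOfFin hA r') (Bᶜ.orderEmbOfFin hB r')).2| ≤ n - N := by
  simp only [offset, apply_orderEmbOfFin_compl, apply_orderEmbOfFin_compl_of_pattern_eq hpat]
  exact ⟨abs_sub_sub_le_of_strictMono (OrderEmbedding.strictMono _)
      (OrderEmbedding.strictMono _) r r',
    abs_sub_sub_le_of_strictMono (OrderEmbedding.strictMono _) (OrderEmbedding.strictMono _) _ _⟩

/- The first (or last) moved entry leaves `|v.1|` consecutive positions and `|v.2|` consecutive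
values deleted by `A`; two entries in both runs would be at distance at most `D - 2`. -/
theorem le_card_add_one_of_forall_offset_eq {D : ℕ} (hbr : ∀ i j, i ≠ j → D ≤ dperm σ i j)
    (hpat : pattern σ A hA = pattern σ B hB) (hAB : A ≠ B) {v : ℤ × ℤ}
    (hv : v.1.natAbs + v.2.natAbs = D)
    (htrans : ∀ r, Aᶜ.orderEmbOfFin hA r ≠ Bᶜ.orderEmbOfFin hB r →
      offset σ (Aᶜ.orderEmbOfFin hA r) (Bᶜ.orderEmbOfFin hB r) = v) :
    D ≤ A.card + 1 := by
  set eA := Aᶜ.orderEmbOfFin hA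
  set eB := Bᶜ.orderEmbOfFin hB
  set π := pattern σ A hA
  have hσA : ∀ r, σ (eA r) = valueEmb σ A hA (π r) := apply_orderEmbOfFin_compl σ A hA
  have hσB : ∀ r, σ (eB r) = valueEmb σ B hB (π r) := apply_orderEmbOfFin_compl_of_pattern_eq hpat
  have hvalue : ∀ j, valueEmb σ A hA j ≠ valueEmb σ B hB j →
      ((valueEmb σ A hA j : ℕ) : ℤ) - (valueEmb σ B hB j : ℕ) = v.2 := by
    intro j hj
    rw [← π.apply_symm_apply j, ← hσA, ← hσB] at hj ⊢
    exact congrArg Prod.snd (htrans _ fun h => hj (congrArg σ h))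
  have hne : ⇑eA ≠ ⇑eB := coe_orderEmbOfFin_compl_ne hA hB hAB
  have hvalue_ne : ⇑(valueEmb σ A hA) ≠ ⇑(valueEmb σ B hB) := fun h => hne <| funext fun r =>
    σ.injective (by rw [hσA, hσB, h])
  obtain ⟨P, hPA, hPcard, hPclose⟩ := exists_interval_subset_of_forall_sub_eq eA.strictMono
    eB.strictMono (compl_subset_range_orderEmbOfFin_compl A hA) hne
    fun r hr => congrArg Prod.fst (htrans r hr)
  obtain ⟨W, hWA, hWcard, hWclose⟩ := exists_interval_subset_of_forall_sub_eq
    (valueEmb σ A hA).strictMono (valueEmb σ B hB).strictMono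
    (compl_subset_range_valueEmb σ A hA) hvalue_ne hvalue
  have := card_add_card_le_of_dperm_lt hbr hPA hWA fun x hx y hy hσx hσy => by
    have := hPclose x hx y hy
    have := hWclose _ hσx _ hσy
    unfold dperm
    omega
  omega

end Translation

/- The nonzero `(d, e)` with `|d|, |e| ≤ 2t` and `e ≡ (2t+1)d [ZMOD 2(t+1)²]`, i.e. the short
nonzero offsets of `σ_{2t}` (`mem_shortOffsets_of_modEq`). -/
def shortOffsets (t : ℤ) : Set (ℤ × ℤ) :=
  {(t + 1, -(t + 1)), (t + 2, t), (-(t + 1), t + 1), (-(t + 2), -t)}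

theorem eq_of_mem_shortOffsets {t : ℤ} {v w : ℤ × ℤ} (hv : v ∈ shortOffsets t)
    (hw : w ∈ shortOffsets t) (h₁ : |v.1 - w.1| ≤ 2 * t) (h₂ : |v.2 - w.2| ≤ 2 * t) : v = w := by
  simp only [shortOffsets, Set.mem_insert_iff, Set.mem_singleton_iff] at hv hw
  rw [abs_le] at h₁ h₂
  rcases hv with rfl | rfl | rfl | rfl <;> rcases hw with rfl | rfl | rfl | rfl <;>
    simp only at h₁ h₂ <;> first | rfl | omega

theorem natAbs_add_natAbs_of_mem_shortOffsets {t : ℕ} {v : ℤ × ℤ} (hv : v ∈ shortOffsets t) :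
    v.1.natAbs + v.2.natAbs = 2 * t + 2 := by
  simp only [shortOffsets, Set.mem_insert_iff, Set.mem_singleton_iff] at hv
  rcases hv with rfl | rfl | rfl | rfl <;> omega

theorem isProlific_of_offset_mem_shortOffsets {n t : ℕ} {σ : Equiv.Perm (Fin n)}
    (hbr : ∀ i j, i ≠ j → 2 * t + 2 ≤ dperm σ i j)
    (hshort : ∀ i j, i ≠ j → |(offset σ i j).1| ≤ 2 * t → |(offset σ i j).2| ≤ 2 * t →
      offset σ i j ∈ shortOffsets t) :
    IsProlific (2 * t) σ := by
  rintro A B hA - hAB ⟨N, hcA, hcB, hpat⟩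
  have hnN : (n : ℤ) - N = 2 * t := by
    have hcompl := card_compl A
    have hle := card_le_univ A
    rw [hcA, hA, Fintype.card_fin] at hcompl
    rw [hA, Fintype.card_fin] at hle
    omega
  have hmem : ∀ r, Aᶜ.orderEmbOfFin hcA r ≠ Bᶜ.orderEmbOfFin hcB r →
      offset σ (Aᶜ.orderEmbOfFin hcA r) (Bᶜ.orderEmbOfFin hcB r) ∈ shortOffsets t := fun r hr =>
    hshort _ _ hr (hnN ▸ (abs_offset_le hpat r).1) (hnN ▸ (abs_offset_le hpat r).2)
  obtain ⟨r₀, hr₀⟩ := Function.ne_iff.mp (coe_orderEmbOfFin_compl_ne hcA hcB hAB)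
  have := le_card_add_one_of_forall_offset_eq hbr hpat hAB
    (natAbs_add_natAbs_of_mem_shortOffsets (hmem r₀ hr₀)) fun r hr =>
      eq_of_mem_shortOffsets (hmem r hr) (hmem r₀ hr₀)
        (hnN ▸ (abs_offset_sub_offset_le hpat r r₀).1)
        (hnN ▸ (abs_offset_sub_offset_le hpat r r₀).2)
  omega

theorem offset_snd_modEq {n k : ℕ} {σ : Equiv.Perm (Fin n)}
    (hσ : ∀ i : Fin n, (σ i : ℕ) + 1 = ((i : ℕ) + 1) * (k + 1) % (n + 1)) (i j : Fin n) :
    (offset σ i j).2 ≡ (offset σ i j).1 * (k + 1) [ZMOD n + 1] := by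
  have h : ∀ i : Fin n, ((σ i : ℕ) + 1 : ℤ) ≡ ((i : ℕ) + 1) * (k + 1) [ZMOD n + 1] := fun i => by
    exact_mod_cast (hσ i ▸ Nat.mod_modEq _ _ : _ ≡ _ [MOD n + 1])
  convert (h i).sub (h j) using 1 <;> simp only [offset] <;> ring

theorem two_mul_add_two_le_abs_add_abs {t d e : ℤ} (ht : 0 ≤ t)
    (h : e ≡ d * (2 * t + 1) [ZMOD 2 * (t + 1) ^ 2]) (hd₀ : d ≠ 0) (hd : |d| ≤ 2 * t ^ 2 + 4 * t)
    (he : |e| ≤ 2 * t ^ 2 + 4 * t) : 2 * t + 2 ≤ |d| + |e| := by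
  wlog hpos : 0 < d generalizing d e
  · simpa using this (d := -d) (e := -e) (by rw [neg_mul]; exact h.neg) (neg_ne_zero.mpr hd₀)
      (by simpa using hd) (by simpa using he) (by omega)
  obtain ⟨c, hc⟩ := h.dvd
  rw [abs_of_pos hpos] at hd ⊢
  rcases le_or_gt (2 * t + 2) d with hd₁ | hd₁
  · linarith [abs_nonneg e]
  rw [abs_le] at he
  have hc₀ : 0 ≤ c := by nlinarith
  have hc₂ : c ≤ 2 := by nlinarith
  interval_cases c <;> rcases le_or_gt d (t + 1) with hd₂ | hd₂ <;>
    rcases abs_cases e with ⟨he', _⟩ | ⟨he', _⟩ <;> rw [he'] <;> nlinarith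

theorem mem_shortOffsets_of_modEq {t : ℤ} {v : ℤ × ℤ} (ht : 0 ≤ t)
    (h : v.2 ≡ v.1 * (2 * t + 1) [ZMOD 2 * (t + 1) ^ 2]) (hd₀ : v.1 ≠ 0) (hd : |v.1| ≤ 2 * t)
    (he : |v.2| ≤ 2 * t) : v ∈ shortOffsets t := by
  obtain ⟨d, e⟩ := v
  obtain ⟨c, hc⟩ := h.dvd
  simp only at hc hd₀ hd he
  rw [abs_le] at hd he
  have hc₁ : -1 ≤ c := by nlinarith
  have hc₂ : c ≤ 1 := by nlinarith
  simp only [shortOffsets, Set.mem_insert_iff, Set.mem_singleton_iff, Prod.mk.injEq]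
  interval_cases c
  · have : -(t + 2) ≤ d := by nlinarith
    have : d ≤ -(t + 1) := by nlinarith
    obtain rfl | rfl : d = -(t + 1) ∨ d = -(t + 2) := by omega
    · right; right; left; constructor <;> linarith
    · right; right; right; constructor <;> linarith
  · rcases hd₀.lt_or_gt with hd' | hd' <;> nlinarith
  · have : t + 1 ≤ d := by nlinarith
    have : d ≤ t + 2 := by nlinarith
    obtain rfl | rfl : d = t + 1 ∨ d = t + 2 := by omega
    · left; constructor <;> linarith
    · right; left; constructor <;> linarith

theorem le_dperm_and_isProlific_of_apply_eq_mul_mod {n k t : ℕ} (hkt : k = 2 * t)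
    (hn : (n : ℤ) + 1 = 2 * (t + 1) ^ 2) {σ : Equiv.Perm (Fin n)}
    (hσ : ∀ i : Fin n, (σ i : ℕ) + 1 = ((i : ℕ) + 1) * (k + 1) % (n + 1)) :
    (∀ i j, i ≠ j → k + 2 ≤ dperm σ i j) ∧ IsProlific k σ := by
  subst hkt
  have hcong : ∀ i j, (offset σ i j).2 ≡ (offset σ i j).1 * (2 * t + 1) [ZMOD 2 * (t + 1) ^ 2] :=
    fun i j => by simpa [hn] using offset_snd_modEq hσ i j
  have hbr : ∀ i j, i ≠ j → 2 * t + 2 ≤ dperm σ i j := fun i j hij => by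
    have hlt := abs_offset_lt σ i j
    have := two_mul_add_two_le_abs_add_abs t.cast_nonneg (hcong i j) (offset_fst_ne_zero hij)
      (by nlinarith) (by nlinarith)
    zify
    linarith [natCast_dperm σ i j]
  exact ⟨hbr, isProlific_of_offset_mem_shortOffsets hbr fun i j hij =>
    mem_shortOffsets_of_modEq t.cast_nonneg (hcong i j) (offset_fst_ne_zero hij)⟩

theorem sigma_even_prolific_general (k : ℕ) (heven : Even k)
    (σ : Equiv.Perm (Fin (k ^ 2 / 2 + 2 * k + 1)))
    (hσ : ∀ i : Fin (k ^ 2 / 2 + 2 * k + 1),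
      (σ i : ℕ) + 1 = (((i : ℕ) + 1) * (k + 1)) % (k ^ 2 / 2 + 2 * k + 1 + 1)) :
    (∀ i j : Fin (k ^ 2 / 2 + 2 * k + 1), i ≠ j → k + 2 ≤ dperm σ i j) ∧
    IsProlific k σ := by
  obtain ⟨t, hkt⟩ := heven
  refine le_dperm_and_isProlific_of_apply_eq_mul_mod (t := t) (by omega) ?_ hσ
  rw [hkt, show (t + t) ^ 2 = 2 * (2 * t ^ 2) by ring, Nat.mul_div_cancel_left _ two_pos]
  push_cast
  ring

/-- For even `k` and `m = k²/2 + 2k + 1`, the permutation `σ_k` of `{1, …, m}` given by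
`σ_k(i) = i(k+1) mod (m+1)` has breadth at least `k + 2`, and is therefore a `k`-prolific
permutation of size `k²/2 + 2k + 1`. -/
theorem sigma_even_prolific (k : ℕ) (hk : 2 ≤ k) (heven : Even k)
    (σ : Equiv.Perm (Fin (k ^ 2 / 2 + 2 * k + 1)))
    (hσ : ∀ i : Fin (k ^ 2 / 2 + 2 * k + 1),
      (σ i : ℕ) + 1 = (((i : ℕ) + 1) * (k + 1)) % (k ^ 2 / 2 + 2 * k + 1 + 1)) :
    (∀ i j : Fin (k ^ 2 / 2 + 2 * k + 1), i ≠ j → k + 2 ≤ dperm σ i j) ∧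
    IsProlific k σ :=
  sigma_even_prolific_general k heven σ hσ

end Prolific
end
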